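/- Let k > 0 and q_R ∈ ℝ with k·q_R > 1. Define S(q) := q·[k·φ(q_R) + Φ(q_R) − Φ(q)] − φ(q) for q ∈ ℝ. Then S(q) > 0 for all q ≥ q_R. -/

import Mathlib

/-- The standard normal density φ(x) = exp(−x²/2)/√(2π). -/
noncomputable def normPdf (x : ℝ) : ℝ := Real.exp (-(x ^ 2) / 2) / Real.sqrt (2 * Real.pi)

/-- The standard normal CDF Φ(x) = ∫_{−∞}^{x} φ(t) dt. -/
noncomputable def normCdf (x : ℝ) : ℝ := ∫ t in Set.Iic x, normPdf t

/-!
The Mills-type bound `a (Φ(b) − Φ(a)) ≤ φ(a) − φ(b)` for `a ≤ b` follows from `a φ(t) ≤ t φ(t)`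
on `[a, b]` and `(−φ)' = t φ`. Using it on `[q_R, q]` and multiplying `S(q)` by `q_R > 0` gives
`q_R S(q) ≥ q φ(q_R) (k q_R − 1) + φ(q) (q − q_R) > 0`.
-/

open MeasureTheory intervalIntegral Set

lemma normPdf_pos (x : ℝ) : 0 < normPdf x := by
  unfold normPdf
  positivity

lemma continuous_normPdf : Continuous normPdf := by
  unfold normPdf
  fun_prop

lemma integrable_normPdf : Integrable normPdf := by
  have h_eq : normPdf = fun x => Real.exp (-(1 / 2 : ℝ) * x ^ 2) * (Real.sqrt (2 * Real.pi))⁻¹ := by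
    funext x
    rw [normPdf, div_eq_mul_inv]
    ring_nf
  rw [h_eq]
  exact (integrable_exp_neg_mul_sq (by norm_num)).mul_const _

lemma hasDerivAt_normPdf (x : ℝ) : HasDerivAt normPdf (-x * normPdf x) x := by
  have h_exponent : HasDerivAt (fun t : ℝ => -(t ^ 2) / 2) (-x) x := by
    simpa using ((hasDerivAt_pow 2 x).neg.div_const 2).congr_deriv (by push_cast; ring)
  exact (((Real.hasDerivAt_exp _).comp x h_exponent).div_const (Real.sqrt (2 * Real.pi))).congr_deriv
    (by simp only [normPdf]; ring)

lemma normCdf_sub_normCdf (a b : ℝ) : normCdf b - normCdf a = ∫ t in a..b, normPdf t := by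
  unfold normCdf
  rw [integral_Iic_sub_Iic integrable_normPdf.integrableOn integrable_normPdf.integrableOn]

lemma integral_mul_normPdf (a b : ℝ) : ∫ t in a..b, t * normPdf t = normPdf a - normPdf b := by
  have h_deriv : ∀ x ∈ uIcc a b, HasDerivAt (fun t => -normPdf t) (x * normPdf x) x := fun x _ => by
    simpa only [neg_mul, neg_neg] using (hasDerivAt_normPdf x).fun_neg
  rw [integral_eq_sub_of_hasDerivAt h_deriv
    ((continuous_id.mul continuous_normPdf).intervalIntegrable a b)]
  ring

lemma mul_normCdf_sub_normCdf_le {a b : ℝ} (hab : a ≤ b) :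
    a * (normCdf b - normCdf a) ≤ normPdf a - normPdf b := by
  rw [normCdf_sub_normCdf, ← intervalIntegral.integral_const_mul, ← integral_mul_normPdf]
  refine integral_mono_on hab ((continuous_normPdf.const_mul a).intervalIntegrable a b)
    ((continuous_id.mul continuous_normPdf).intervalIntegrable a b) fun t ht => ?_
  exact mul_le_mul_of_nonneg_right ht.1 (normPdf_pos t).le

/-- If k > 0 and k·q_R > 1, then
S(q) = q·[k·φ(q_R) + Φ(q_R) − Φ(q)] − φ(q) is strictly positive for all q ≥ q_R. -/
theorem S_pos (k qR : ℝ) (hk : 0 < k) (h : 1 < k * qR) :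
    ∀ q : ℝ, qR ≤ q →
      q * (k * normPdf qR + normCdf qR - normCdf q) - normPdf q > 0 := by
  intro q hq
  have hqR : 0 < qR := pos_of_mul_pos_right (one_pos.trans h) hk.le
  have hq_pos : 0 < q := hqR.trans_le hq
  have h_mills := mul_le_mul_of_nonneg_left (mul_normCdf_sub_normCdf_le hq) hq_pos.le
  have h_lower : 0 < q * normPdf qR * (k * qR - 1) + normPdf q * (q - qR) :=
    add_pos_of_pos_of_nonneg (mul_pos (mul_pos hq_pos (normPdf_pos qR)) (by linarith))
      (mul_nonneg (normPdf_pos q).le (by linarith))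
  suffices 0 < qR * (q * (k * normPdf qR + normCdf qR - normCdf q) - normPdf q) from
    pos_of_mul_pos_right this hqR.le
  linear_combination h_lower + h_mills
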